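/- arXiv:1502.06165 — 4 statements merged into one kernel-verified Lean document; each statement's English description precedes it below -/
import Mathlib

section
/- For every finite simple graph G, CCW(G) ≥ ⌈s(G)/2⌉ − 1, where s(G) is the largest number of leaves of an induced star in G. -/
open SimpleGraph

/-- `f` is an ordered clique cover of `G` (fibers are cliques) of width at most `w`. -/
def IsCliqueCoverWidthLE {V : Type*} (G : SimpleGraph V) (f : V → ℤ) (w : ℕ) : Prop :=
  (∀ i : ℤ, G.IsClique {v | f v = i}) ∧ ∀ ⦃x y : V⦄, G.Adj x y → |f x - f y| ≤ (w : ℤ)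

/-- The clique cover width of `G`. -/
noncomputable def CCW {V : Type*} (G : SimpleGraph V) : ℕ :=
  sInf {w : ℕ | ∃ f : V → ℤ, IsCliqueCoverWidthLE G f w}

/-- `f` is a linear ordering (injective labelling) of the vertices of width at most `w`. -/
def IsOrderingWidthLE {V : Type*} (G : SimpleGraph V) (f : V → ℤ) (w : ℕ) : Prop :=
  Function.Injective f ∧ ∀ ⦃x y : V⦄, G.Adj x y → |f x - f y| ≤ (w : ℤ)

/-- The bandwidth of `G`. -/
noncomputable def BW {V : Type*} (G : SimpleGraph V) : ℕ :=
  sInf {w : ℕ | ∃ f : V → ℤ, IsOrderingWidthLE G f w}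

/-- The largest number of leaves of an induced star in `G`. -/
noncomputable def starNum {V : Type*} (G : SimpleGraph V) : ℕ :=
  sSup {s : ℕ | ∃ (v : V) (T : Finset V), T.card = s ∧ v ∉ T ∧
    (∀ x ∈ T, G.Adj v x) ∧ ∀ x ∈ T, ∀ y ∈ T, x ≠ y → ¬ G.Adj x y}

theorem ccw_ge_half_starNum {V : Type*} [Fintype V] (G : SimpleGraph V) :
    (starNum G + 1) / 2 - 1 ≤ CCW G := by
  classical
  have hS : {w : ℕ | ∃ f : V → ℤ, IsCliqueCoverWidthLE G f w}.Nonempty := by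
    refine ⟨Fintype.card V, fun v => ((Fintype.equivFin V v : ℕ) : ℤ), ?_, ?_⟩
    · intro i x hx y hy hxy
      exfalso
      apply hxy
      have h : ((Fintype.equivFin V x : ℕ) : ℤ) = ((Fintype.equivFin V y : ℕ) : ℤ) :=
        hx.trans hy.symm
      have h2 : (Fintype.equivFin V x : ℕ) = (Fintype.equivFin V y : ℕ) := by
        exact_mod_cast h
      exact (Fintype.equivFin V).injective (Fin.ext h2)
    · intro x y _
      have hx : ((Fintype.equivFin V x : ℕ) : ℤ) < Fintype.card V := by
        exact_mod_cast (Fintype.equivFin V x).2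
      have hy : ((Fintype.equivFin V y : ℕ) : ℤ) < Fintype.card V := by
        exact_mod_cast (Fintype.equivFin V y).2
      have hx0 : (0 : ℤ) ≤ ((Fintype.equivFin V x : ℕ) : ℤ) := Int.ofNat_nonneg _
      have hy0 : (0 : ℤ) ≤ ((Fintype.equivFin V y : ℕ) : ℤ) := Int.ofNat_nonneg _
      dsimp only
      rw [abs_le]
      omega
  have hmem := Nat.sInf_mem hS
  obtain ⟨f, hclique, hwidth⟩ := hmem
  have hCCW : CCW G = sInf {w : ℕ | ∃ f : V → ℤ, IsCliqueCoverWidthLE G f w} := rfl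
  set w : ℕ := sInf {w : ℕ | ∃ f : V → ℤ, IsCliqueCoverWidthLE G f w} with hw
  have hstar : starNum G ≤ 2 * w + 1 := by
    apply csSup_le'
    rintro s ⟨v, T, hcard, hvT, hadj, hind⟩
    have hinj : Set.InjOn f T := by
      intro x hx y hy hxy
      by_contra hne
      exact hind x hx y hy hne
        (hclique (f x) (by exact rfl) (by exact hxy.symm) hne)
    have hmap : ∀ x ∈ T, f x ∈ Finset.Icc (f v - w) (f v + w) := by
      intro x hx
      have h := hwidth (hadj x hx)
      rw [abs_le] at h
      rw [Finset.mem_Icc]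
      omega
    have hle := Finset.card_le_card_of_injOn f hmap hinj
    rw [hcard, Int.card_Icc] at hle
    omega
  rw [hCCW]
  omega
end

section
/- Let P_1 and P_2 be vertex-disjoint paths, each on 2t+1 vertices with t ≥ 1, and let G be the graph obtained by identifying the middle vertices of P_1 and P_2. Then CCW(G) = 2. -/
open SimpleGraph

/-- Helper: membership facts from an equality of unordered pairs (as sets). -/
lemma pair_eq_cases {V : Type*} {x y u v : V} (h : ({x, y} : Set V) = {u, v}) :
    (x = u ∨ x = v) ∧ (y = u ∨ y = v) := by
  constructor
  · have hx : x ∈ ({u, v} : Set V) := by rw [← h]; exact Set.mem_insert _ _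
    simpa using hx
  · have hy : y ∈ ({u, v} : Set V) := by
      rw [← h]; exact Set.mem_insert_of_mem _ rfl
    simpa using hy

open Classical in
/-- The interleaving label for the two glued paths. -/
noncomputable def glueLabel {V : Type*} {n : ℕ} (t : ℕ) (f g : Fin n → V) (v : V) : ℤ :=
  if hv : ∃ i, f i = v then 2 * (hv.choose.val : ℤ) - 2 * t
  else if hw : ∃ j, g j = v then
    (if hw.choose.val = t then 0
     else if hw.choose.val < t then 2 * (hw.choose.val : ℤ) - 2 * t + 1
     else 2 * (hw.choose.val : ℤ) - 2 * t - 1)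
  else 0

/-- The value of `glueLabel` on the second path. -/
def midLabel (t j : ℕ) : ℤ :=
  if j = t then 0 else if j < t then 2 * (j : ℤ) - 2 * t + 1 else 2 * (j : ℤ) - 2 * t - 1

/-- Clique sum of two odd paths at their middle vertices has clique cover width 2. -/
theorem ccw_of_two_paths_glued {V : Type*} [Fintype V] (G : SimpleGraph V)
    (t : ℕ) (ht : 1 ≤ t) (f g : Fin (2 * t + 1) → V)
    (hf : Function.Injective f) (hg : Function.Injective g)
    (hmeet : ∀ i j, f i = g j ↔ (i = ⟨t, by omega⟩ ∧ j = ⟨t, by omega⟩))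
    (hcover : ∀ v : V, (∃ i, f i = v) ∨ (∃ i, g i = v))
    (hAdj : ∀ x y : V, G.Adj x y ↔ ∃ i : Fin (2 * t),
      ({x, y} : Set V) = {f i.castSucc, f i.succ} ∨
      ({x, y} : Set V) = {g i.castSucc, g i.succ}) :
    CCW G = 2 := by
  classical
  -- ### values of glueLabel
  have hhf : ∀ i : Fin (2 * t + 1), glueLabel t f g (f i) = 2 * (i.val : ℤ) - 2 * t := by
    intro i
    have hv : ∃ i', f i' = f i := ⟨i, rfl⟩
    unfold glueLabel
    rw [dif_pos hv, hf hv.choose_spec]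
  have hmid : f ⟨t, by omega⟩ = g ⟨t, by omega⟩ := (hmeet _ _).2 ⟨rfl, rfl⟩
  have hhg : ∀ j : Fin (2 * t + 1), glueLabel t f g (g j) = midLabel t j.val := by
    intro j
    by_cases hjt : j.val = t
    · have hj : j = ⟨t, by omega⟩ := Fin.ext hjt
      rw [hj, ← hmid, hhf]
      simp [midLabel]
    · have hnv : ¬ ∃ i, f i = g j := by
        rintro ⟨i, hi⟩
        exact hjt (congrArg Fin.val ((hmeet i j).1 hi).2)
      have hw : ∃ j', g j' = g j := ⟨j, rfl⟩
      unfold glueLabel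
      rw [dif_neg hnv, dif_pos hw, hg hw.choose_spec]
      rfl
  -- ### injectivity of glueLabel
  have hinj : ∀ x y : V, glueLabel t f g x = glueLabel t f g y → x = y := by
    intro x y hxy
    rcases hcover x with ⟨i, rfl⟩ | ⟨i, rfl⟩ <;> rcases hcover y with ⟨j, rfl⟩ | ⟨j, rfl⟩
    · rw [hhf, hhf] at hxy
      exact congrArg f (Fin.ext (by omega))
    · rw [hhf, hhg] at hxy
      unfold midLabel at hxy
      split_ifs at hxy with h1 h2
      · exact (hmeet i j).2 ⟨Fin.ext (show i.val = t by omega), Fin.ext (show j.val = t by omega)⟩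
      · omega
      · omega
    · rw [hhg, hhf] at hxy
      unfold midLabel at hxy
      split_ifs at hxy with h1 h2
      · exact ((hmeet j i).2 ⟨Fin.ext (show j.val = t by omega), Fin.ext (show i.val = t by omega)⟩).symm
      · omega
      · omega
    · rw [hhg, hhg] at hxy
      unfold midLabel at hxy
      split_ifs at hxy <;> exact congrArg g (Fin.ext (by omega))
  -- ### upper bound: glueLabel is a clique cover of width 2
  have hup : IsCliqueCoverWidthLE G (glueLabel t f g) 2 := by
    constructor
    · intro k x hx y hy hne
      exact absurd (hinj x y (hx.trans hy.symm)) hne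
    · intro x y hxy
      obtain ⟨i, hc | hc⟩ := (hAdj x y).1 hxy
      · obtain ⟨h1 | h1, h2 | h2⟩ := pair_eq_cases hc <;> subst h1 <;> subst h2 <;>
          (simp only [hhf]
           rw [abs_le]
           simp only [Fin.coe_castSucc, Fin.val_succ]
           push_cast
           omega)
      · obtain ⟨h1 | h1, h2 | h2⟩ := pair_eq_cases hc <;> subst h1 <;> subst h2 <;>
          (simp only [hhg]
           rw [abs_le]
           simp only [Fin.coe_castSucc, Fin.val_succ]
           unfold midLabel
           split_ifs <;> constructor <;> push_cast <;> omega)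
  -- ### non-adjacency lemmas
  have nadj_ff : ∀ p q : Fin (2 * t + 1), p.val + 2 ≤ q.val → ¬ G.Adj (f p) (f q) := by
    intro p q hpq had
    obtain ⟨i, hc | hc⟩ := (hAdj _ _).1 had
    · obtain ⟨h1 | h1, h2 | h2⟩ := pair_eq_cases hc <;>
        (have v1 := congrArg Fin.val (hf h1)
         have v2 := congrArg Fin.val (hf h2)
         simp only [Fin.coe_castSucc, Fin.val_succ] at v1 v2
         omega)
    · obtain ⟨h1 | h1, h2 | h2⟩ := pair_eq_cases hc <;>
        (have v1 := congrArg Fin.val ((hmeet _ _).1 h1).1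
         have v2 := congrArg Fin.val ((hmeet _ _).1 h2).1
         simp only at v1 v2
         omega)
  have nadj_gg : ∀ p q : Fin (2 * t + 1), p.val + 2 ≤ q.val → ¬ G.Adj (g p) (g q) := by
    intro p q hpq had
    obtain ⟨i, hc | hc⟩ := (hAdj _ _).1 had
    · obtain ⟨h1 | h1, h2 | h2⟩ := pair_eq_cases hc <;>
        (have v1 := congrArg Fin.val ((hmeet _ _).1 h1.symm).2
         have v2 := congrArg Fin.val ((hmeet _ _).1 h2.symm).2
         simp only at v1 v2
         omega)
    · obtain ⟨h1 | h1, h2 | h2⟩ := pair_eq_cases hc <;>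
        (have v1 := congrArg Fin.val (hg h1)
         have v2 := congrArg Fin.val (hg h2)
         simp only [Fin.coe_castSucc, Fin.val_succ] at v1 v2
         omega)
  have nadj_fg : ∀ p q : Fin (2 * t + 1), p.val ≠ t → q.val ≠ t → ¬ G.Adj (f p) (g q) := by
    intro p q hp hq had
    obtain ⟨i, hc | hc⟩ := (hAdj _ _).1 had
    · obtain ⟨h1 | h1, h2 | h2⟩ := pair_eq_cases hc <;>
        exact hq (congrArg Fin.val ((hmeet _ _).1 h2.symm).2)
    · obtain ⟨h1 | h1, h2 | h2⟩ := pair_eq_cases hc <;>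
        exact hp (congrArg Fin.val ((hmeet _ _).1 h1).1)
  -- ### the star vertices
  have adj_ca : G.Adj (f ⟨t, by omega⟩) (f ⟨t - 1, by omega⟩) := by
    refine (hAdj _ _).2 ⟨⟨t - 1, by omega⟩, Or.inl ?_⟩
    have e1 : (⟨t - 1, by omega⟩ : Fin (2 * t)).castSucc = (⟨t - 1, by omega⟩ : Fin (2 * t + 1)) :=
      Fin.ext (by simp)
    have e2 : (⟨t - 1, by omega⟩ : Fin (2 * t)).succ = (⟨t, by omega⟩ : Fin (2 * t + 1)) :=
      Fin.ext (by simp [Fin.val_succ]; omega)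
    rw [e1, e2, Set.pair_comm]
  have adj_cb : G.Adj (f ⟨t, by omega⟩) (f ⟨t + 1, by omega⟩) := by
    refine (hAdj _ _).2 ⟨⟨t, by omega⟩, Or.inl ?_⟩
    have e1 : (⟨t, by omega⟩ : Fin (2 * t)).castSucc = (⟨t, by omega⟩ : Fin (2 * t + 1)) :=
      Fin.ext (by simp)
    have e2 : (⟨t, by omega⟩ : Fin (2 * t)).succ = (⟨t + 1, by omega⟩ : Fin (2 * t + 1)) :=
      Fin.ext (by simp [Fin.val_succ])
    rw [e1, e2]
  have adj_cd : G.Adj (f ⟨t, by omega⟩) (g ⟨t - 1, by omega⟩) := by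
    refine (hAdj _ _).2 ⟨⟨t - 1, by omega⟩, Or.inr ?_⟩
    have e1 : (⟨t - 1, by omega⟩ : Fin (2 * t)).castSucc = (⟨t - 1, by omega⟩ : Fin (2 * t + 1)) :=
      Fin.ext (by simp)
    have e2 : (⟨t - 1, by omega⟩ : Fin (2 * t)).succ = (⟨t, by omega⟩ : Fin (2 * t + 1)) :=
      Fin.ext (by simp [Fin.val_succ]; omega)
    rw [e1, e2, hmid, Set.pair_comm]
  have adj_ce : G.Adj (f ⟨t, by omega⟩) (g ⟨t + 1, by omega⟩) := by
    refine (hAdj _ _).2 ⟨⟨t, by omega⟩, Or.inr ?_⟩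
    have e1 : (⟨t, by omega⟩ : Fin (2 * t)).castSucc = (⟨t, by omega⟩ : Fin (2 * t + 1)) :=
      Fin.ext (by simp)
    have e2 : (⟨t, by omega⟩ : Fin (2 * t)).succ = (⟨t + 1, by omega⟩ : Fin (2 * t + 1)) :=
      Fin.ext (by simp [Fin.val_succ])
    rw [e1, e2, hmid]
  -- distinctness of the leaves
  have ne_fg : ∀ p q : Fin (2 * t + 1), p.val ≠ t → f p ≠ g q :=
    fun p q hp h => hp (congrArg Fin.val ((hmeet _ _).1 h).1)
  have ne_ab : f ⟨t - 1, by omega⟩ ≠ f ⟨t + 1, by omega⟩ := by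
    intro h
    have := congrArg Fin.val (hf h)
    simp only at this
    omega
  have ne_de : g ⟨t - 1, by omega⟩ ≠ g ⟨t + 1, by omega⟩ := by
    intro h
    have := congrArg Fin.val (hg h)
    simp only at this
    omega
  -- ### lower bound: no clique cover of width ≤ 1
  have key : ∀ w : ℕ, w ≤ 1 → ∀ f' : V → ℤ, ¬ IsCliqueCoverWidthLE G f' w := by
    rintro w hw1 f' ⟨hcl, hb⟩
    have hb1 : ∀ x y : V, G.Adj x y → |f' x - f' y| ≤ 1 := by
      intro x y h
      exact (hb h).trans (by exact_mod_cast hw1)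
    have eqadj : ∀ x y : V, x ≠ y → f' x = f' y → G.Adj x y := by
      intro x y hne heq
      exact hcl (f' x) (show f' x = f' x from rfl) heq.symm hne
    have d1 := hb1 _ _ adj_ca
    have d2 := hb1 _ _ adj_cb
    have d3 := hb1 _ _ adj_cd
    have d4 := hb1 _ _ adj_ce
    have nab : f' (f ⟨t - 1, by omega⟩) ≠ f' (f ⟨t + 1, by omega⟩) := by
      intro h
      exact nadj_ff ⟨t - 1, by omega⟩ ⟨t + 1, by omega⟩ (show t - 1 + 2 ≤ t + 1 by omega)
        (eqadj _ _ ne_ab h)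
    have nde : f' (g ⟨t - 1, by omega⟩) ≠ f' (g ⟨t + 1, by omega⟩) := by
      intro h
      exact nadj_gg ⟨t - 1, by omega⟩ ⟨t + 1, by omega⟩ (show t - 1 + 2 ≤ t + 1 by omega)
        (eqadj _ _ ne_de h)
    have nad : f' (f ⟨t - 1, by omega⟩) ≠ f' (g ⟨t - 1, by omega⟩) := by
      intro h
      exact nadj_fg ⟨t - 1, by omega⟩ ⟨t - 1, by omega⟩ (show t - 1 ≠ t by omega)
        (show t - 1 ≠ t by omega) (eqadj _ _ (ne_fg _ _ (show t - 1 ≠ t by omega)) h)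
    have nae : f' (f ⟨t - 1, by omega⟩) ≠ f' (g ⟨t + 1, by omega⟩) := by
      intro h
      exact nadj_fg ⟨t - 1, by omega⟩ ⟨t + 1, by omega⟩ (show t - 1 ≠ t by omega)
        (show t + 1 ≠ t by omega) (eqadj _ _ (ne_fg _ _ (show t - 1 ≠ t by omega)) h)
    have nbd : f' (f ⟨t + 1, by omega⟩) ≠ f' (g ⟨t - 1, by omega⟩) := by
      intro h
      exact nadj_fg ⟨t + 1, by omega⟩ ⟨t - 1, by omega⟩ (show t + 1 ≠ t by omega)
        (show t - 1 ≠ t by omega) (eqadj _ _ (ne_fg _ _ (show t + 1 ≠ t by omega)) h)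
    have nbe : f' (f ⟨t + 1, by omega⟩) ≠ f' (g ⟨t + 1, by omega⟩) := by
      intro h
      exact nadj_fg ⟨t + 1, by omega⟩ ⟨t + 1, by omega⟩ (show t + 1 ≠ t by omega)
        (show t + 1 ≠ t by omega) (eqadj _ _ (ne_fg _ _ (show t + 1 ≠ t by omega)) h)
    rw [abs_le] at d1 d2 d3 d4
    omega
  -- ### conclusion
  unfold CCW
  have h2S : 2 ∈ {w : ℕ | ∃ f₀ : V → ℤ, IsCliqueCoverWidthLE G f₀ w} :=
    ⟨glueLabel t f g, hup⟩
  refine le_antisymm (Nat.sInf_le h2S) ?_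
  by_contra hlt
  push_neg at hlt
  obtain ⟨f', hf'⟩ := Nat.sInf_mem (⟨2, h2S⟩ :
    Set.Nonempty {w : ℕ | ∃ f₀ : V → ℤ, IsCliqueCoverWidthLE G f₀ w})
  exact key _ (by omega) f' hf'
end

section
/- If a graph G admits an ordered clique cover of width 1 (i.e., CCW(G) ≤ 1), then G is an incomparability graph: there exists a partial order on V(G) such that two distinct vertices are adjacent in G if and only if they are incomparable in the partial order. -/
open SimpleGraph

theorem incomparability_of_ccw_le_one {V : Type*} [Fintype V] (G : SimpleGraph V)
    (h : ∃ f : V → ℤ, IsCliqueCoverWidthLE G f 1) :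
    ∃ le : V → V → Prop, IsPartialOrder V le ∧
      ∀ u v : V, u ≠ v → (G.Adj u v ↔ ¬ le u v ∧ ¬ le v u) := by
  obtain ⟨f, hclique, hw⟩ := h
  refine ⟨fun u v => u = v ∨ (¬ G.Adj u v ∧ f u < f v),
    { refl := fun a => Or.inl rfl, trans := ?_, antisymm := ?_ }, ?_⟩
  · rintro a b c (rfl | ⟨hab, h1⟩) h2
    · exact h2
    rcases h2 with rfl | ⟨hbc, h2⟩
    · exact Or.inr ⟨hab, h1⟩
    refine Or.inr ⟨fun hac => ?_, h1.trans h2⟩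
    have := hw hac
    rw [abs_le] at this
    omega
  · rintro a b (rfl | ⟨hab, h1⟩) h2
    · rfl
    rcases h2 with rfl | ⟨hba, h2⟩
    · rfl
    · omega
  · intro u v huv
    constructor
    · intro hadj
      exact ⟨fun h => h.elim huv (fun h => h.1 hadj),
        fun h => h.elim (fun h => huv h.symm) (fun h => h.1 hadj.symm)⟩
    · rintro ⟨h1, h2⟩
      by_contra hadj
      have hfeq : f u = f v := by
        by_contra hne
        rcases lt_or_gt_of_ne hne with hlt | hgt
        · exact h1 (Or.inr ⟨hadj, hlt⟩)
        · exact h2 (Or.inr ⟨fun h => hadj h.symm, hgt⟩)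
      exact hadj (hclique (f u) (by simp) (by simp [hfeq]) huv)
end

section
/- For any graph G and any ordered clique cover C of G of width w, if an induced star in G has center v ∈ c_i and leaves in cliques c_{j_1},...,c_{j_s}, then each clique c_j contains at most one leaf of the star, and all leaf-cliques satisfy |j - i| ≤ w; hence s ≤ 2w + 2, i.e., s(G) ≤ 2·CCW(G) + 2. -/
open SimpleGraph

lemma star_aux {V : Type*} (G : SimpleGraph V)
    (f : V → ℤ) (w : ℕ) (hcover : IsCliqueCoverWidthLE G f w)
    (v : V) (T : Finset V)
    (hleaf : ∀ x ∈ T, G.Adj v x)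
    (hindep : ∀ x ∈ T, ∀ y ∈ T, x ≠ y → ¬ G.Adj x y) :
    T.card ≤ 2 * w + 2 := by
  have hinj : ∀ x ∈ T, ∀ y ∈ T, f x = f y → x = y := by
    intro x hx y hy hxy
    by_contra hne
    exact hindep x hx y hy hne (hcover.1 (f x) rfl hxy.symm hne)
  have hmap : ∀ x ∈ T, f x ∈ Finset.Icc (f v - w) (f v + w) := by
    intro x hx
    have := hcover.2 (hleaf x hx)
    rw [abs_le] at this
    simp only [Finset.mem_Icc]; omega
  calc T.card ≤ (Finset.Icc (f v - (w:ℤ)) (f v + w)).card :=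
        Finset.card_le_card_of_injOn f hmap (fun x hx y hy => hinj x hx y hy)
    _ ≤ 2 * w + 2 := by
        rw [Int.card_Icc]
        omega

theorem star_leaves_bound {V : Type*} [Fintype V] (G : SimpleGraph V)
    (f : V → ℤ) (w : ℕ) (hcover : IsCliqueCoverWidthLE G f w)
    (v : V) (T : Finset V) (hvT : v ∉ T)
    (hleaf : ∀ x ∈ T, G.Adj v x)
    (hindep : ∀ x ∈ T, ∀ y ∈ T, x ≠ y → ¬ G.Adj x y) :
    (∀ x ∈ T, ∀ y ∈ T, f x = f y → x = y) ∧
    (∀ x ∈ T, |f x - f v| ≤ (w : ℤ)) ∧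
    T.card ≤ 2 * w + 2 ∧
    starNum G ≤ 2 * CCW G + 2 := by
  refine ⟨?_, ?_, star_aux G f w hcover v T hleaf hindep, ?_⟩
  · intro x hx y hy hxy
    by_contra hne
    exact hindep x hx y hy hne (hcover.1 (f x) rfl hxy.symm hne)
  · intro x hx
    rw [abs_sub_comm]
    exact hcover.2 (hleaf x hx)
  · -- the set of widths is nonempty
    have hne : {w : ℕ | ∃ f : V → ℤ, IsCliqueCoverWidthLE G f w}.Nonempty := by
      refine ⟨Fintype.card V, fun x => ((Fintype.equivFin V) x : ℤ), ?_, ?_⟩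
      · intro i
        intro x hx y hy hxy
        exfalso
        apply hxy
        have : ((Fintype.equivFin V) x : ℤ) = ((Fintype.equivFin V) y : ℤ) := by
          simp only [Set.mem_setOf_eq] at hx hy; omega
        exact (Fintype.equivFin V).injective (Fin.ext (by exact_mod_cast this))
      · intro x y _
        have hx := ((Fintype.equivFin V) x).isLt
        have hy := ((Fintype.equivFin V) y).isLt
        show |((Fintype.equivFin V) x : ℤ) - ((Fintype.equivFin V) y : ℤ)| ≤ (Fintype.card V : ℤ)
        rw [abs_le]
        omega
    obtain ⟨f0, hf0⟩ := Nat.sInf_mem hne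
    apply csSup_le'
    rintro s ⟨v', T', hcard, _, hleaf', hindep'⟩
    rw [← hcard]
    exact star_aux G f0 (CCW G) hf0 v' T' hleaf' hindep'
end
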